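/- Let q be an odd positive integer and G a group. Then G⊗^q G ≅ ∇^q(G) × (G∧^q G). -/

import Mathlib

/-!
Nonabelian tensor square modulo `q` (Conduché–Ellis / Brown–Loday for `q = 0`),
presented by generators `g ⊗ h` and `{(g,g)}` with the defining relations.
-/

namespace QTensor

/-- Generators of the `q`-tensor square: `t g h` stands for `g ⊗ h`,
and `d g` stands for the symbol `{(g,g)}`. -/
inductive Gen (G : Type) : Type
  | t : G → G → Gen G
  | d : G → Gen G

variable (G : Type) [Group G]

/-- The word `g ⊗ h` in the free group on the generators. -/
def T (g h : G) : FreeGroup (Gen G) := FreeGroup.of (Gen.t g h)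

/-- The word `{(g,g)}` in the free group on the generators. -/
def D (g : G) : FreeGroup (Gen G) := FreeGroup.of (Gen.d g)

/-- The word `∏_{i=1}^{q-1} (g⁻¹ ⊗ (^(g^(1-q+i)) g₁)^i)` appearing in relation (4). -/
def relProd (q : ℕ) (g g₁ : G) : FreeGroup (Gen G) :=
  ((List.range (q - 1)).map (fun j =>
    T G g⁻¹ ((g ^ ((1 : ℤ) - (q : ℤ) + (j + 1 : ℕ)) * g₁ *
      (g ^ ((1 : ℤ) - (q : ℤ) + (j + 1 : ℕ)))⁻¹) ^ (j + 1)))).prod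

/-- The defining relations of the `q`-tensor square.  For `q = 0` the symbols
`{(g,g)}` are killed, so that the group is the Brown–Loday nonabelian tensor
square generated by the `g ⊗ h` subject to relations (1) and (2). -/
def rels (q : ℕ) : Set (FreeGroup (Gen G)) :=
  {r | ∃ g g₁ h : G,
      r = T G (g * g₁) h * (T G (g * g₁ * g⁻¹) (g * h * g⁻¹) * T G g h)⁻¹} ∪
  {r | ∃ g h h₁ : G,
      r = T G g (h * h₁) * (T G g h * T G (h * g * h⁻¹) (h * h₁ * h⁻¹))⁻¹} ∪
  {r | ∃ g g₁ h₁ : G,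
      r = D G g * T G g₁ h₁ * (D G g)⁻¹ *
        (T G (g ^ q * g₁ * (g ^ q)⁻¹) (g ^ q * h₁ * (g ^ q)⁻¹))⁻¹} ∪
  {r | ∃ g g₁ : G,
      r = D G (g * g₁) * (D G g * relProd G q g g₁ * D G g₁)⁻¹} ∪
  {r | ∃ g g₁ : G,
      r = D G g * D G g₁ * (D G g)⁻¹ * (D G g₁)⁻¹ * (T G (g ^ q) (g₁ ^ q))⁻¹} ∪
  {r | ∃ g h : G,
      r = D G (g * h * g⁻¹ * h⁻¹) * ((T G g h) ^ q)⁻¹} ∪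
  {r | q = 0 ∧ ∃ g : G, r = D G g}

/-- The nonabelian tensor square modulo `q`, `G ⊗^q G`. -/
def tensorSquare (q : ℕ) : Type := PresentedGroup (rels G q)

instance (q : ℕ) : Group (tensorSquare G q) := by unfold tensorSquare; infer_instance

/-- The element `g ⊗ h` of `G ⊗^q G`. -/
def tmk (q : ℕ) (g h : G) : tensorSquare G q := PresentedGroup.of (Gen.t g h)

/-- The element `{(g,g)}` of `G ⊗^q G`. -/
def dmk (q : ℕ) (g : G) : tensorSquare G q := PresentedGroup.of (Gen.d g)

/-- `∇^q(G)`, the normal closure of the elements `g ⊗ g` in `G ⊗^q G`. -/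
def nabla (q : ℕ) : Subgroup (tensorSquare G q) :=
  Subgroup.normalClosure {x | ∃ g : G, x = tmk G q g g}

instance (q : ℕ) : (nabla G q).Normal := Subgroup.normalClosure_normal

/-- The exterior square modulo `q`, `G ∧^q G = (G ⊗^q G)/∇^q(G)`. -/
def extSquare (q : ℕ) : Type := tensorSquare G q ⧸ nabla G q

instance (q : ℕ) : Group (extSquare G q) := by unfold extSquare; infer_instance

/-- The element `g ∧ h` of `G ∧^q G`. -/
def wmk (q : ℕ) (g h : G) : extSquare G q := QuotientGroup.mk (tmk G q g h)

/-- The image of the symbol `{(g,g)}` in `G ∧^q G`. -/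
def dwmk (q : ℕ) (g : G) : extSquare G q := QuotientGroup.mk (dmk G q g)

/-- The exterior centre variant `Z^∧_q(G) = {g : g ∧ h = 1 for all h}` (as a set). -/
def Zext (q : ℕ) : Set G := {g | ∀ h : G, wmk G q g h = 1}

/-- `E^∧_q(G) = {g ∈ Z^∧_q(G) : {(g,g)} = 1 in G ∧^q G}` (as a set); for `q = 0`
the second condition is automatic, so `E^∧_0(G) = Z^∧(G)`. -/
def Eext (q : ℕ) : Set G := {g | (∀ h : G, wmk G q g h = 1) ∧ dwmk G q g = 1}

/-- The subgroup `G^q[G,G]` generated by all `q`-th powers and all commutators. -/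
def qPowComm (q : ℕ) : Subgroup G :=
  Subgroup.closure ({x | ∃ g : G, x = g ^ q} ∪ {x | ∃ a b : G, x = a * b * a⁻¹ * b⁻¹})

theorem pow_mem_qPowComm (q : ℕ) (g : G) : g ^ q ∈ qPowComm G q :=
  Subgroup.subset_closure (Or.inl ⟨g, rfl⟩)

theorem commutator_mem_qPowComm (q : ℕ) (a b : G) :
    a * b * a⁻¹ * b⁻¹ ∈ qPowComm G q :=
  Subgroup.subset_closure (Or.inr ⟨a, b, rfl⟩)

open scoped commutatorElement in
theorem mem_commutator (a b : G) : ⁅a, b⁆ ∈ commutator G :=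
  Subgroup.commutator_mem_commutator (Subgroup.mem_top a) (Subgroup.mem_top b)

/-- `M₀^q(G)`: the subgroup of `G ∧^q G` generated by the `x ∧ y` with `[x,y] = 1`.
(It is contained in the `q`-Schur multiplier `M^q(G)`.) -/
def M0 (q : ℕ) : Subgroup (extSquare G q) :=
  Subgroup.closure {x | ∃ a b : G, a * b = b * a ∧ x = wmk G q a b}

/-- `M̂₀^q(G)`: the subgroup of `G ∧^q G` generated by the `x ∧ y` with `[x,y] = 1`
together with the `{(g,g)}` with `g^q = 1`. -/
def M0hat (q : ℕ) : Subgroup (extSquare G q) :=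
  Subgroup.closure
    ({x | ∃ a b : G, a * b = b * a ∧ x = wmk G q a b} ∪
     {x | ∃ g : G, g ^ q = 1 ∧ x = dwmk G q g})

/-- A group `Q` is capable if `Q ≅ E/Z(E)` for some group `E`. -/
def Capable (Q : Type) [Group Q] : Prop :=
  ∃ (E : Type) (_ : Group E), Nonempty (Q ≃* E ⧸ Subgroup.center E)

end QTensor

/-!
For odd `q`, the elements `γ(g) = g ⊗ g` satisfy `γ(g)^q = {(1,1)} = 1` by relations (6) and
(4), and the crossed-pairing identities (1), (2) alone give `γ(^w u)^2 = γ(u)^2`; since `q` is odd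
this forces `γ(^w u) = γ(u)`, so relation (3) makes every `γ(g)` central, and `∇^q(G)` is the
abelian subgroup generated by the `γ(g)`. The symmetrised elements
`(g ⊗ h)(h ⊗ g) = γ(g)⁻¹ γ(h)⁻¹ γ(gh)` are then bilinear, conjugation invariant and of exponent
`q`, so `g ⊗ h ↦ ((g ⊗ h)(h ⊗ g))^((q+1)/2)`, `{(g,g)} ↦ 1` respects all defining relations. The
resulting endomorphism retracts `G ⊗^q G` onto `∇^q(G)` (it sends `γ(g)` to `γ(g)^(q+1) = γ(g)`),
which splits off `∇^q(G)` as a direct factor.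
-/

lemma eq_of_sq_eq_of_pow_eq_one {M : Type*} [Monoid M] {x y : M} {n : ℕ} (hn : Odd n)
    (hx : x ^ n = 1) (hy : y ^ n = 1) (h : x ^ 2 = y ^ 2) : x = y := by
  obtain ⟨k, rfl⟩ := hn
  have sq_pow : ∀ z : M, z ^ (2 * k + 1) = 1 → z = (z ^ 2) ^ (k + 1) := fun z hz => by
    rw [← pow_mul, show 2 * (k + 1) = 2 * k + 1 + 1 by ring, pow_succ, hz, one_mul]
  rw [sq_pow x hx, sq_pow y hy, h]

lemma List.prod_range_pow_succ_eq_one {M : Type*} [CommMonoid M] {d : M} {k : ℕ}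
    (hd : d ^ (2 * k + 1) = 1) : ((List.range (2 * k)).map fun j => d ^ (j + 1)).prod = 1 := by
  have gauss : ∑ j ∈ Finset.range (2 * k), (j + 1) = (2 * k + 1) * k := by
    have h := Finset.sum_range_id_mul_two (2 * k + 1)
    rw [Finset.sum_range_succ'] at h
    simp only [add_zero, add_tsub_cancel_right] at h
    linarith
  have to_finset : ((List.range (2 * k)).map fun j => d ^ (j + 1)).prod =
      ∏ j ∈ Finset.range (2 * k), d ^ (j + 1) := by
    rw [Finset.prod_eq_multiset_prod, Finset.range_val, Multiset.range, Multiset.map_coe,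
      Multiset.prod_coe]
  rw [to_finset, Finset.prod_pow_eq_pow_sum, gauss, pow_mul, hd, one_pow]

lemma Subgroup.normalClosure_eq_closure_of_subset_center {G : Type*} [Group G] {s : Set G}
    (hs : s ⊆ Subgroup.center G) : Subgroup.normalClosure s = Subgroup.closure s := by
  have hle : Subgroup.closure s ≤ Subgroup.center G := (Subgroup.closure_le _).mpr hs
  have : (Subgroup.closure s).Normal := ⟨fun n hn g => by
    rwa [Subgroup.mem_center_iff.mp (hle hn) g, mul_inv_cancel_right]⟩
  exact le_antisymm (Subgroup.normalClosure_le_normal Subgroup.subset_closure)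
    Subgroup.closure_le_normalClosure

noncomputable def Subgroup.prodQuotientEquivOfRetraction {H : Type*} [Group H]
    (N : Subgroup H) [N.Normal] (r : H →* N) (hr : ∀ n : N, r n = n) : H ≃* N × H ⧸ N :=
  MulEquiv.ofBijective (r.prod (QuotientGroup.mk' N)) <| by
    refine ⟨(injective_iff_map_eq_one _).mpr fun x hx => ?_, fun ⟨n, y⟩ => ?_⟩
    · have hxN : x ∈ N := (QuotientGroup.eq_one_iff x).mp (congrArg Prod.snd hx)
      simpa [hr ⟨x, hxN⟩] using congrArg Prod.fst hx
    · obtain ⟨x, rfl⟩ := QuotientGroup.mk'_surjective N y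
      refine ⟨x * ((r x)⁻¹ * n : N), Prod.ext ?_ ?_⟩
      · simp [hr]
      · simp

structure CrossedPairing (G T : Type*) [Group G] [Group T] where
  toFun : G → G → T
  map_mul_left (g g₁ h : G) :
    toFun (g * g₁) h = toFun (g * g₁ * g⁻¹) (g * h * g⁻¹) * toFun g h
  map_mul_right (g h h₁ : G) :
    toFun g (h * h₁) = toFun g h * toFun (h * g * h⁻¹) (h * h₁ * h⁻¹)

namespace CrossedPairing

variable {G T : Type*} [Group G] [Group T] (P : CrossedPairing G T)

instance : CoeFun (CrossedPairing G T) fun _ => G → G → T := ⟨toFun⟩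

lemma apply_one_left (h : G) : P 1 h = 1 := by
  simpa using P.map_mul_left 1 1 h

lemma apply_one_right (g : G) : P g 1 = 1 := by
  simpa using P.map_mul_right g 1 1

lemma apply_mul_apply (g h p r : G) :
    P g h * P p r =
      P (g*h*g⁻¹*h⁻¹ * p * (g*h*g⁻¹*h⁻¹)⁻¹) (g*h*g⁻¹*h⁻¹ * r * (g*h*g⁻¹*h⁻¹)⁻¹) * P g h := by
  -- expand `P (g * x) (h * y)` first in the left and then in the right variable, and conversely
  have key : ∀ x y : G, P (g*h*x*(g*h)⁻¹) (g*h*y*(g*h)⁻¹) * P g h =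
      P g h * P (h*g*x*(h*g)⁻¹) (h*g*y*(h*g)⁻¹) := by
    intro x y
    have left_first := P.map_mul_left g x (h * y)
    rw [P.map_mul_right g h y, show g*(h*y)*g⁻¹ = (g*h*g⁻¹)*(g*y*g⁻¹) by group,
      P.map_mul_right (g*x*g⁻¹) (g*h*g⁻¹) (g*y*g⁻¹),
      show g*h*g⁻¹*(g*x*g⁻¹)*(g*h*g⁻¹)⁻¹ = g*h*x*(g*h)⁻¹ by group,
      show g*h*g⁻¹*(g*y*g⁻¹)*(g*h*g⁻¹)⁻¹ = g*h*y*(g*h)⁻¹ by group] at left_first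
    have right_first := P.map_mul_right (g * x) h y
    rw [P.map_mul_left g x h, show h*(g*x)*h⁻¹ = (h*g*h⁻¹)*(h*x*h⁻¹) by group,
      P.map_mul_left (h*g*h⁻¹) (h*x*h⁻¹) (h*y*h⁻¹),
      show h*g*h⁻¹*(h*x*h⁻¹)*(h*g*h⁻¹)⁻¹ = h*g*x*(h*g)⁻¹ by group,
      show h*g*h⁻¹*(h*y*h⁻¹)*(h*g*h⁻¹)⁻¹ = h*g*y*(h*g)⁻¹ by group] at right_first
    have both := left_first.symm.trans right_first
    exact mul_right_cancel (b := P (h*g*h⁻¹) (h*y*h⁻¹))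
      (mul_left_cancel (a := P (g*x*g⁻¹) (g*h*g⁻¹)) (by simpa only [mul_assoc] using both))
  simpa only [show ∀ x, g*h*((h*g)⁻¹*x*(h*g))*(g*h)⁻¹ = g*h*g⁻¹*h⁻¹ * x * (g*h*g⁻¹*h⁻¹)⁻¹ by
      intro x; group, show ∀ x, h*g*((h*g)⁻¹*x*(h*g))*(h*g)⁻¹ = x by intro x; group]
    using (key ((h*g)⁻¹*p*(h*g)) ((h*g)⁻¹*r*(h*g))).symm

lemma commute_apply_self (z p r : G) : Commute (P z z) (P p r) := by
  show P z z * P p r = P p r * P z z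
  rw [P.apply_mul_apply]
  congr 2 <;> group

lemma commute_apply_mul_apply_swap (a b p r : G) : Commute (P a b * P b a) (P p r) := by
  have hab := P.apply_mul_apply a b
  have hba := P.apply_mul_apply b a p r
  show P a b * P b a * P p r = P p r * (P a b * P b a)
  rw [mul_assoc, hba, ← mul_assoc, hab, mul_assoc]
  congr 2 <;> group

/-- The identities between the `P g g` and the `P a b * P b a` are computed in this abelian
group. -/
def centralPart : Subgroup T :=
  Subgroup.closure (Set.range (Function.uncurry P)) ⊓
    Subgroup.centralizer (Set.range (Function.uncurry P))

instance : CommGroup P.centralPart :=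
  { (inferInstance : Group P.centralPart) with
    mul_comm := fun a b => Subtype.ext <| Subgroup.mem_centralizer_iff.mp
      (Subgroup.closure_le_centralizer_centralizer _ (Subgroup.mem_inf.mp b.2).1) a
      (Subgroup.mem_inf.mp a.2).2 }

lemma mem_centralPart {x : T} (hx : x ∈ Subgroup.closure (Set.range (Function.uncurry P)))
    (hcomm : ∀ p r, Commute x (P p r)) : x ∈ P.centralPart := by
  refine Subgroup.mem_inf.mpr ⟨hx, Subgroup.mem_centralizer_iff.mpr ?_⟩
  rintro _ ⟨⟨p, r⟩, rfl⟩
  exact (hcomm p r).symm.eq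

lemma apply_mem_closure (a b : G) : P a b ∈ Subgroup.closure (Set.range (Function.uncurry P)) :=
  Subgroup.subset_closure ⟨(a, b), rfl⟩

def diag (g : G) : P.centralPart :=
  ⟨P g g, P.mem_centralPart (P.apply_mem_closure g g) (P.commute_apply_self g)⟩

def sym (a b : G) : P.centralPart :=
  ⟨P a b * P b a, P.mem_centralPart (mul_mem (P.apply_mem_closure a b) (P.apply_mem_closure b a))
    (P.commute_apply_mul_apply_swap a b)⟩

@[simp] lemma coe_diag (g : G) : (P.diag g : T) = P g g := rfl

@[simp] lemma coe_sym (a b : G) : (P.sym a b : T) = P a b * P b a := rfl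

lemma sym_self (a : G) : P.sym a a = P.diag a * P.diag a := rfl

lemma diag_mul (u v : G) : P.diag (u * v) = P.diag (v * u * v⁻¹) * P.diag v * P.sym u v := by
  have expand : P (u * v) (u * v) = P u v * (P (v*u*v⁻¹) (v*u*v⁻¹) * (P v v * P v u)) := by
    rw [show u * v = v * (v⁻¹ * u * v) by group, P.map_mul_left v (v⁻¹ * u * v),
      show v * (v⁻¹ * u * v) * v⁻¹ = u by group,
      show v * (v * (v⁻¹ * u * v)) * v⁻¹ = v * u by group,
      P.map_mul_right u v u, P.map_mul_right v v, show v * v * v⁻¹ = v by group,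
      show v * (v⁻¹ * u * v) * v⁻¹ = u by group]
    group
  apply Subtype.ext
  rw [Subgroup.coe_mul, Subgroup.coe_mul, coe_diag, coe_diag, coe_diag, coe_sym, expand,
    (P.commute_apply_self _ u v).symm.left_comm, (P.commute_apply_self v u v).symm.left_comm]
  group

lemma sym_mul_left (x a b : G) :
    P.sym (x * a) b = P.sym (x*a*x⁻¹) (x*b*x⁻¹) * P.sym x b := by
  apply Subtype.ext
  rw [Subgroup.coe_mul, coe_sym, coe_sym, coe_sym, P.map_mul_left, P.map_mul_right b x a, mul_assoc,
    ← mul_assoc (P x b), (P.commute_apply_mul_apply_swap x b _ _).eq]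
  group

lemma sym_mul_right (x a b : G) :
    P.sym a (x * b) = P.sym a x * P.sym (x*a*x⁻¹) (x*b*x⁻¹) := by
  apply Subtype.ext
  rw [Subgroup.coe_mul, coe_sym, coe_sym, coe_sym, P.map_mul_right, P.map_mul_left x b a, mul_assoc,
    ← mul_assoc (P (x*a*x⁻¹) _), (P.commute_apply_mul_apply_swap _ _ x a).eq]
  group

lemma apply_conj_self_comm (g h z : G) :
    P (g*h*z*(g*h)⁻¹) (g*h*z*(g*h)⁻¹) = P (h*g*z*(h*g)⁻¹) (h*g*z*(h*g)⁻¹) := by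
  have key := P.apply_mul_apply g h (h*g*z*(h*g)⁻¹) (h*g*z*(h*g)⁻¹)
  rw [← (P.commute_apply_self _ g h).eq,
    show g*h*g⁻¹*h⁻¹ * (h*g*z*(h*g)⁻¹) * (g*h*g⁻¹*h⁻¹)⁻¹ = g*h*z*(g*h)⁻¹ by group] at key
  exact (mul_right_cancel key).symm

lemma diag_conj_sq (w u : G) : P.diag (w*u*w⁻¹) ^ 2 = P.diag u ^ 2 := by
  -- expand `P.diag (u * u * w)` along `(u * u) * w` and along `u * (u * w)`
  have via_left : P.diag (u*u*w) = P.diag (w*u*w⁻¹) ^ 2 *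
      (P.diag (w*u*w⁻¹) ^ 2 * P.diag w * (P.sym u (u*w*u⁻¹) * P.sym u w)) := by
    rw [P.diag_mul (u*u) w, show w*(u*u)*w⁻¹ = (w*u*w⁻¹)*(w*u*w⁻¹) by group, P.diag_mul,
      mul_inv_cancel_right, sym_self, P.sym_mul_left u u w, mul_inv_cancel_right]
    simp only [sq]
    ac_rfl
  have via_right : P.diag (u*(u*w)) = P.diag u ^ 2 *
      (P.diag (w*u*w⁻¹) ^ 2 * P.diag w * (P.sym u (u*w*u⁻¹) * P.sym u w)) := by
    have conj : P.diag ((u*w)*u*(u*w)⁻¹) = P.diag (w*u*w⁻¹) := Subtype.ext <| by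
      simpa only [coe_diag, show w*u*u*(w*u)⁻¹ = w*u*w⁻¹ by group]
        using P.apply_conj_self_comm u w u
    rw [P.diag_mul u (u*w), conj, P.diag_mul u w, P.sym_mul_right u u w, sym_self,
      mul_inv_cancel_right]
    simp only [sq]
    ac_rfl
  exact mul_right_cancel (via_left.symm.trans ((congrArg P.diag (mul_assoc u u w)).trans via_right))

lemma sym_one_right (a : G) : P.sym a 1 = 1 :=
  Subtype.ext <| by rw [coe_sym, P.apply_one_left, P.apply_one_right, mul_one, Subgroup.coe_one]

def DiagConjInvariant : Prop := ∀ w u : G, P.diag (w * u * w⁻¹) = P.diag u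

namespace DiagConjInvariant

variable {P}

lemma sym_eq (hP : P.DiagConjInvariant) (u v : G) :
    P.sym u v = (P.diag u * P.diag v)⁻¹ * P.diag (u * v) := by
  rw [P.diag_mul, hP, eq_inv_mul_iff_mul_eq]

lemma sym_conj (hP : P.DiagConjInvariant) (x a b : G) :
    P.sym (x*a*x⁻¹) (x*b*x⁻¹) = P.sym a b := by
  rw [hP.sym_eq, hP.sym_eq, hP, hP, show x*a*x⁻¹ * (x*b*x⁻¹) = x*(a*b)*x⁻¹ by group, hP]

lemma sym_mul_right (hP : P.DiagConjInvariant) (a x b : G) :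
    P.sym a (x * b) = P.sym a x * P.sym a b := by
  rw [P.sym_mul_right, hP.sym_conj]

lemma sym_pow_right (hP : P.DiagConjInvariant) (a b : G) (n : ℕ) :
    P.sym a (b ^ n) = P.sym a b ^ n := by
  induction n with
  | zero => rw [pow_zero, pow_zero, P.sym_one_right]
  | succ n ih => rw [pow_succ, hP.sym_mul_right, ih, pow_succ]

lemma sym_pow_eq_one {n : ℕ} (hP : P.DiagConjInvariant) (hn : ∀ g, P.diag g ^ n = 1)
    (a b : G) : P.sym a b ^ n = 1 := by
  rw [hP.sym_eq, mul_pow, inv_pow, mul_pow, hn, hn, hn, mul_one, one_mul, inv_one]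

end DiagConjInvariant

end CrossedPairing

namespace QTensor

variable {G : Type} [Group G] {q : ℕ}

variable (G q) in
def mkHom : FreeGroup (Gen G) →* tensorSquare G q := PresentedGroup.mk (rels G q)

lemma mkHom_eq_of_mul_inv_mem {x y : FreeGroup (Gen G)} (h : x * y⁻¹ ∈ rels G q) :
    mkHom G q x = mkHom G q y :=
  PresentedGroup.mk_eq_mk_of_mul_inv_mem h

@[simp] lemma mkHom_T (g h : G) : mkHom G q (T G g h) = tmk G q g h := rfl

@[simp] lemma mkHom_D (g : G) : mkHom G q (D G g) = dmk G q g := rfl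

variable (G q) in
def tensorPairing : CrossedPairing G (tensorSquare G q) where
  toFun := tmk G q
  map_mul_left g g₁ h := by
    simpa using mkHom_eq_of_mul_inv_mem (q := q)
      (Or.inl (Or.inl (Or.inl (Or.inl (Or.inl (Or.inl ⟨g, g₁, h, rfl⟩))))))
  map_mul_right g h h₁ := by
    simpa using mkHom_eq_of_mul_inv_mem (q := q)
      (Or.inl (Or.inl (Or.inl (Or.inl (Or.inl (Or.inr ⟨g, h, h₁, rfl⟩))))))

lemma dmk_conj_tmk (g g₁ h₁ : G) :
    dmk G q g * tmk G q g₁ h₁ * (dmk G q g)⁻¹ =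
      tmk G q (g ^ q * g₁ * (g ^ q)⁻¹) (g ^ q * h₁ * (g ^ q)⁻¹) := by
  simpa using mkHom_eq_of_mul_inv_mem (q := q)
    (Or.inl (Or.inl (Or.inl (Or.inl (Or.inr ⟨g, g₁, h₁, rfl⟩)))))

lemma dmk_mul (g g₁ : G) :
    dmk G q (g * g₁) = dmk G q g * mkHom G q (relProd G q g g₁) * dmk G q g₁ := by
  simpa using mkHom_eq_of_mul_inv_mem (q := q) (Or.inl (Or.inl (Or.inl (Or.inr ⟨g, g₁, rfl⟩))))

lemma dmk_commutator (g h : G) : dmk G q (g * h * g⁻¹ * h⁻¹) = tmk G q g h ^ q := by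
  simpa using mkHom_eq_of_mul_inv_mem (q := q) (Or.inl (Or.inr ⟨g, h, rfl⟩))

lemma dmk_one : dmk G q 1 = 1 := by
  have trivial_prod : mkHom G q (relProd G q 1 1) = 1 := by
    rw [relProd, map_list_prod, List.map_map]
    refine List.prod_eq_one fun x hx => ?_
    obtain ⟨j, -, rfl⟩ := List.mem_map.mp hx
    simp only [Function.comp, mkHom_T, inv_one]
    exact (tensorPairing G q).apply_one_left _
  simpa only [trivial_prod, mul_one, left_eq_mul] using dmk_mul (q := q) (1 : G) 1

lemma diag_pow_eq_one (g : G) : (tensorPairing G q).diag g ^ q = 1 := by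
  have h := dmk_commutator (q := q) g g
  rw [show g * g * g⁻¹ * g⁻¹ = 1 by group, dmk_one] at h
  exact Subtype.ext h.symm

lemma diagConjInvariant (hq : Odd q) : (tensorPairing G q).DiagConjInvariant := fun w u =>
  eq_of_sq_eq_of_pow_eq_one hq (diag_pow_eq_one _) (diag_pow_eq_one _)
    ((tensorPairing G q).diag_conj_sq w u)

lemma mem_of_tmk_mem_of_dmk_mem {H : Subgroup (tensorSquare G q)} (ht : ∀ u v, tmk G q u v ∈ H)
    (hd : ∀ u, dmk G q u ∈ H) (x : tensorSquare G q) : x ∈ H :=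
  PresentedGroup.generated_by (rels G q) H (by rintro (⟨u, v⟩ | u); exacts [ht u v, hd u]) x

lemma tmk_self_mem_center (hq : Odd q) (g : G) :
    tmk G q g g ∈ Subgroup.center (tensorSquare G q) := by
  refine Subgroup.mem_center_iff.mpr fun k => Subgroup.mem_centralizer_singleton_iff.mp
    (mem_of_tmk_mem_of_dmk_mem (fun u v => ?_) (fun u => ?_) k) <;>
    rw [Subgroup.mem_centralizer_singleton_iff]
  · exact ((tensorPairing G q).commute_apply_self g u v).symm.eq
  · have h := dmk_conj_tmk (q := q) u g g
    rw [show tmk G q (u ^ q * g * (u ^ q)⁻¹) (u ^ q * g * (u ^ q)⁻¹) = tmk G q g g from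
      congrArg Subtype.val (diagConjInvariant hq (u ^ q) g)] at h
    exact mul_inv_eq_iff_eq_mul.mp h

lemma tmk_self_mem_nabla (g : G) : tmk G q g g ∈ nabla G q :=
  Subgroup.subset_normalClosure ⟨g, rfl⟩

lemma nabla_eq_closure (hq : Odd q) :
    nabla G q = Subgroup.closure {x | ∃ g : G, x = tmk G q g g} :=
  Subgroup.normalClosure_eq_closure_of_subset_center <| by
    rintro _ ⟨g, rfl⟩
    exact tmk_self_mem_center hq g

lemma sym_mem_nabla (hq : Odd q) (u v : G) :
    ((tensorPairing G q).sym u v : tensorSquare G q) ∈ nabla G q := by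
  rw [(diagConjInvariant hq).sym_eq]
  exact mul_mem (inv_mem (mul_mem (tmk_self_mem_nabla u) (tmk_self_mem_nabla v)))
    (tmk_self_mem_nabla (u * v))

variable (G q) in
/-- `(q + 1) / 2` inverts `2` modulo `q`, so `g ⊗ g ↦ γ(g) ^ (2 * ((q + 1) / 2)) = γ(g)`. -/
def symRetractionGen : Gen G → (tensorPairing G q).centralPart
  | .t g h => (tensorPairing G q).sym g h ^ ((q + 1) / 2)
  | .d _ => 1

lemma lift_symRetractionGen_T (g h : G) :
    FreeGroup.lift (symRetractionGen G q) (T G g h) =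
      (tensorPairing G q).sym g h ^ ((q + 1) / 2) :=
  FreeGroup.lift_apply_of

lemma lift_symRetractionGen_D (g : G) :
    FreeGroup.lift (symRetractionGen G q) (D G g) = 1 :=
  FreeGroup.lift_apply_of

lemma lift_symRetractionGen_relProd (hq : Odd q) (g g₁ : G) :
    FreeGroup.lift (symRetractionGen G q) (relProd G q g g₁) = 1 := by
  have hP := diagConjInvariant (G := G) hq
  have factor : ∀ (z : ℤ) (j : ℕ),
      FreeGroup.lift (symRetractionGen G q) (T G g⁻¹ ((g ^ z * g₁ * (g ^ z)⁻¹) ^ (j + 1))) =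
        ((tensorPairing G q).sym g⁻¹ g₁ ^ ((q + 1) / 2)) ^ (j + 1) := by
    intro z j
    have conj : (tensorPairing G q).sym g⁻¹ (g ^ z * g₁ * (g ^ z)⁻¹) =
        (tensorPairing G q).sym g⁻¹ g₁ := by
      simpa only [show g ^ z * g⁻¹ * (g ^ z)⁻¹ = g⁻¹ by group] using hP.sym_conj (g ^ z) g⁻¹ g₁
    rw [lift_symRetractionGen_T, hP.sym_pow_right, conj, ← pow_mul, ← pow_mul, mul_comm]
  obtain ⟨k, hk⟩ := hq
  rw [relProd, map_list_prod, List.map_map, show q - 1 = 2 * k by omega]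
  simp only [Function.comp_def, factor]
  refine List.prod_range_pow_succ_eq_one ?_
  rw [← pow_mul, mul_comm, pow_mul, ← hk, hP.sym_pow_eq_one diag_pow_eq_one, one_pow]

lemma lift_symRetractionGen_rel (hq : Odd q) :
    ∀ r ∈ rels G q, FreeGroup.lift (symRetractionGen G q) r = 1 := by
  have hP := diagConjInvariant (G := G) hq
  rintro r ((((((⟨g, g₁, h, rfl⟩ | ⟨g, h, h₁, rfl⟩) | ⟨g, g₁, h₁, rfl⟩) | ⟨g, g₁, rfl⟩) |
    ⟨g, g₁, rfl⟩) | ⟨g, h, rfl⟩) | ⟨hq0, -⟩)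
  any_goals simp only [map_mul, map_inv, map_pow, lift_symRetractionGen_T,
    lift_symRetractionGen_D, mul_inv_eq_one, one_mul, mul_one, inv_one, inv_eq_one]
  · rw [CrossedPairing.sym_mul_left, mul_pow]
  · rw [CrossedPairing.sym_mul_right, mul_pow]
  · rw [hP.sym_conj]
  · rw [lift_symRetractionGen_relProd hq]
  · rw [hP.sym_pow_right, hP.sym_pow_eq_one diag_pow_eq_one, one_pow]
  · rw [← pow_mul, mul_comm, pow_mul, hP.sym_pow_eq_one diag_pow_eq_one, one_pow]
  · exact absurd hq0 hq.pos.ne'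

def symRetraction (hq : Odd q) : tensorSquare G q →* (tensorPairing G q).centralPart :=
  PresentedGroup.toGroup (lift_symRetractionGen_rel hq)

lemma symRetraction_tmk (hq : Odd q) (g h : G) :
    symRetraction hq (tmk G q g h) = (tensorPairing G q).sym g h ^ ((q + 1) / 2) :=
  PresentedGroup.toGroup.of _

lemma symRetraction_dmk (hq : Odd q) (g : G) : symRetraction hq (dmk G q g) = 1 :=
  PresentedGroup.toGroup.of _

lemma symRetraction_tmk_self (hq : Odd q) (g : G) :
    symRetraction hq (tmk G q g g) = (tensorPairing G q).diag g := by
  have two_mul_half : 2 * ((q + 1) / 2) = q + 1 := by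
    obtain ⟨k, rfl⟩ := hq
    omega
  rw [symRetraction_tmk, CrossedPairing.sym_self, ← sq, ← pow_mul, two_mul_half, pow_succ,
    diag_pow_eq_one, one_mul]

lemma symRetraction_mem_nabla (hq : Odd q) (x : tensorSquare G q) :
    (symRetraction hq x : tensorSquare G q) ∈ nabla G q :=
  mem_of_tmk_mem_of_dmk_mem
    (H := (nabla G q).comap ((tensorPairing G q).centralPart.subtype.comp (symRetraction hq)))
    (fun u v => by simpa [symRetraction_tmk] using pow_mem (sym_mem_nabla hq u v) _)
    (fun u => by simp [symRetraction_dmk]) x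

def nablaRetraction (hq : Odd q) : tensorSquare G q →* nabla G q :=
  ((tensorPairing G q).centralPart.subtype.comp (symRetraction hq)).codRestrict _
    (symRetraction_mem_nabla hq)

lemma nablaRetraction_apply_coe (hq : Odd q) (n : nabla G q) : nablaRetraction hq n = n := by
  suffices nabla G q ≤ MonoidHom.eqLocus
      ((tensorPairing G q).centralPart.subtype.comp (symRetraction hq)) (MonoidHom.id _) from
    Subtype.ext (this n.2)
  rw [nabla_eq_closure hq, Subgroup.closure_le]
  rintro _ ⟨g, rfl⟩
  exact congrArg Subtype.val (symRetraction_tmk_self hq g)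

end QTensor

open QTensor in
theorem tensorSquare_iso_nabla_prod_extSquare_of_odd_general (q : ℕ) (hq : Odd q)
    (G : Type) [Group G] :
    Nonempty (tensorSquare G q ≃* (nabla G q) × extSquare G q) :=
  ⟨(nabla G q).prodQuotientEquivOfRetraction (nablaRetraction hq) (nablaRetraction_apply_coe hq)⟩

open QTensor in
/-- For odd positive `q`, `G ⊗^q G ≅ ∇^q(G) × (G ∧^q G)`. -/
theorem tensorSquare_iso_nabla_prod_extSquare_of_odd (q : ℕ) (hq : Odd q)
    (hq' : 0 < q) (G : Type) [Group G] :
    Nonempty (tensorSquare G q ≃* (nabla G q) × extSquare G q) :=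
  tensorSquare_iso_nabla_prod_extSquare_of_odd_general q hq G
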